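/- As formal power series, Σ_{n≥0} q^n/∏_{j=0}^{n}(1−q^{2j+1}) = Σ_{n≥0} q^{2n²+2n}/∏_{j=0}^{n}(1−q^{2j+1})², i.e., the two standard expressions for Ramanujan's third order mock theta function ω(q) agree. -/

import Mathlib

open PowerSeries Finset

/-- The coefficient of `q^n` in `Σ_{k≥0} q^k / ∏_{j=0}^{k} (1 − q^{2j+1})`,
computed in `ℚ[[q]]`. The `k`-th summand has order `≥ k`, so truncating the sum
at `k = n` captures the coefficient of `q^n`. -/
noncomputable def mockOmegaCoeffAlt (n : ℕ) : ℚ :=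
  ∑ k ∈ Finset.range (n + 1),
    PowerSeries.coeff (R := ℚ) n
      (PowerSeries.X ^ k *
        ∏ j ∈ Finset.range (k + 1), (1 - PowerSeries.X ^ (2 * j + 1) : PowerSeries ℚ)⁻¹)

/-- The coefficient of `q^n` in `Σ_{k≥0} q^{2k²+2k} / ∏_{j=0}^{k} (1 − q^{2j+1})²`,
computed in `ℚ[[q]]`. -/
noncomputable def mockOmegaCoeff (n : ℕ) : ℚ :=
  ∑ k ∈ Finset.range (n + 1),
    PowerSeries.coeff (R := ℚ) n
      (PowerSeries.X ^ (2 * k ^ 2 + 2 * k) *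
        (∏ j ∈ Finset.range (k + 1), (1 - PowerSeries.X ^ (2 * j + 1) : PowerSeries ℚ)⁻¹) ^ 2)

/-!
Both series equal `(1 - q)⁻¹ F(q)`, where `F(t) = ∑ tⁿ / (tq²; q²)ₙ`. Comparing `F(t)` with
`t F(t)` termwise gives the Rogers–Fine functional equation
`(1 - t) F(t) = 1 + t²q² / (1 - tq²) · F(tq²)`, and iterating it from `t = q` writes
`(1 - q) F(q)` as `∑_{k<N} q^{2k²+2k} / (q³; q²)ₖ²` plus a multiple of `q^N`.
Infinite sums are taken in the coefficientwise topology of `K⟦X⟧`, in which a family whose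
`k`-th member is divisible by `X ^ k` is summable, with only the first `n + 1` members
contributing to the coefficient of `X ^ n`.
-/

open PowerSeries.WithPiTopology

namespace PowerSeries

section Summation

variable {R : Type*} [CommRing R]

lemma coeff_eq_zero_of_X_pow_dvd_of_notMem_range {f : ℕ → R⟦X⟧} (hf : ∀ k, X ^ k ∣ f k)
    {n k : ℕ} (hk : k ∉ range (n + 1)) : coeff n (f k) = 0 :=
  X_pow_dvd_iff.mp (hf k) n (by simpa [Nat.lt_succ_iff] using hk)

lemma X_pow_dvd_X_pow_mul {e n : ℕ} (h : n ≤ e) (φ : R⟦X⟧) : X ^ n ∣ X ^ e * φ :=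
  (pow_dvd_pow X h).mul_right φ

variable [TopologicalSpace R]

theorem summable_of_X_pow_dvd {f : ℕ → R⟦X⟧} (hf : ∀ k, X ^ k ∣ f k) : Summable f :=
  (summable_iff_summable_coeff R).mpr fun _ =>
    summable_of_ne_finset_zero fun _ hk => coeff_eq_zero_of_X_pow_dvd_of_notMem_range hf hk

variable [T2Space R]

theorem coeff_tsum_of_X_pow_dvd {f : ℕ → R⟦X⟧} (hf : ∀ k, X ^ k ∣ f k) (n : ℕ) :
    coeff n (∑' k, f k) = ∑ k ∈ range (n + 1), coeff n (f k) :=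
  ((hasSum_iff_hasSum_coeff R).mp (summable_of_X_pow_dvd hf).hasSum n).unique <|
    hasSum_sum_of_ne_finset_zero fun _ hk => coeff_eq_zero_of_X_pow_dvd_of_notMem_range hf hk

theorem tsum_eq_of_X_pow_dvd_sub_sum {f : ℕ → R⟦X⟧} (hf : ∀ k, X ^ k ∣ f k) {φ : R⟦X⟧}
    (hφ : ∀ N, X ^ N ∣ φ - ∑ k ∈ range N, f k) : ∑' k, f k = φ := by
  ext n
  have h := X_pow_dvd_iff.mp (hφ (n + 1)) n n.lt_succ_self
  rw [map_sub, sub_eq_zero] at h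
  rw [coeff_tsum_of_X_pow_dvd hf, ← map_sum, h]

end Summation

variable {K : Type*} [Field K]

lemma one_sub_X_pow_mul_inv {a : ℕ} (ha : a ≠ 0) : (1 - X ^ a : K⟦X⟧) * (1 - X ^ a)⁻¹ = 1 :=
  PowerSeries.mul_inv_cancel _ (by simp [zero_pow ha])

end PowerSeries

namespace RogersFine

variable (K : Type*) [Field K]

/-- `1 / (tq²; q²)ₙ` with `t = X ^ a` and `q = X`. -/
noncomputable def invQPochhammer (a n : ℕ) : K⟦X⟧ :=
  ∏ i ∈ range n, (1 - X ^ (a + 2 * (i + 1)))⁻¹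

/-- `F(t) = ∑ tⁿ / (tq²; q²)ₙ` with `t = X ^ a` and `q = X`. -/
noncomputable def series [TopologicalSpace K] (a : ℕ) : K⟦X⟧ :=
  ∑' n, X ^ (a * n) * invQPochhammer K a n

variable {K}

lemma invQPochhammer_zero (a : ℕ) : invQPochhammer K a 0 = 1 := prod_range_zero _

lemma invQPochhammer_succ (a n : ℕ) :
    invQPochhammer K a (n + 1) = invQPochhammer K a n * (1 - X ^ (a + 2 * (n + 1)))⁻¹ :=
  prod_range_succ _ _

lemma invQPochhammer_succ' (a n : ℕ) :
    invQPochhammer K a (n + 1) = (1 - X ^ (a + 2))⁻¹ * invQPochhammer K (a + 2) n := by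
  rw [invQPochhammer, prod_range_succ', mul_comm, invQPochhammer]
  congr 1
  refine prod_congr rfl fun i _ => ?_
  rw [show a + 2 * (i + 1 + 1) = a + 2 + 2 * (i + 1) by ring]

lemma invQPochhammer_succ_sub (a n : ℕ) :
    invQPochhammer K a (n + 1) - invQPochhammer K a n =
      X ^ (a + 2 * (n + 1)) * invQPochhammer K a (n + 1) := by
  rw [invQPochhammer_succ]
  linear_combination
    invQPochhammer K a n * one_sub_X_pow_mul_inv (K := K) (a := a + 2 * (n + 1)) (by omega)

lemma summable_X_pow_mul_invQPochhammer [TopologicalSpace K] {a : ℕ} (ha : 0 < a) :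
    Summable fun n => X ^ (a * n) * invQPochhammer K a n :=
  summable_of_X_pow_dvd fun n => X_pow_dvd_X_pow_mul (Nat.le_mul_of_pos_left n ha) _

lemma X_pow_dvd_X_pow_mul_invQPochhammer_sq (a k : ℕ) :
    X ^ k ∣ X ^ (2 * a * k + 2 * k ^ 2) * invQPochhammer K a k ^ 2 :=
  X_pow_dvd_X_pow_mul (by nlinarith) _

variable [TopologicalSpace K] [IsTopologicalRing K] [T2Space K]

theorem one_sub_X_pow_mul_series {a : ℕ} (ha : 0 < a) :
    (1 - X ^ a) * series K a = 1 + X ^ (2 * a + 2) * (1 - X ^ (a + 2))⁻¹ * series K (a + 2) := by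
  have hterm : ∀ n, X ^ (a * (n + 1)) * invQPochhammer K a (n + 1) -
        X ^ a * (X ^ (a * n) * invQPochhammer K a n) =
      X ^ (2 * a + 2) * (1 - X ^ (a + 2))⁻¹ * (X ^ ((a + 2) * n) * invQPochhammer K (a + 2) n) := by
    intro n
    calc _ = X ^ (a * (n + 1)) * (invQPochhammer K a (n + 1) - invQPochhammer K a n) := by ring
      _ = X ^ (a * (n + 1)) * (X ^ (a + 2 * (n + 1)) * invQPochhammer K a (n + 1)) := by
        rw [invQPochhammer_succ_sub]
      _ = _ := by rw [invQPochhammer_succ']; ring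
  have hs := summable_X_pow_mul_invQPochhammer (K := K) ha
  rw [series, series, sub_mul, one_mul, ← hs.tsum_mul_left, hs.tsum_eq_zero_add, add_sub_assoc,
    ← ((summable_nat_add_iff 1).mpr hs).tsum_sub (hs.mul_left _),
    ← (summable_X_pow_mul_invQPochhammer (K := K) (by omega : 0 < a + 2)).tsum_mul_left]
  simp only [hterm, mul_zero, pow_zero, invQPochhammer_zero, one_mul]

lemma one_sub_X_pow_mul_series_eq_sum_add {a : ℕ} (ha : 0 < a) (N : ℕ) :
    (1 - X ^ a) * series K a =
      ∑ k ∈ range N, X ^ (2 * a * k + 2 * k ^ 2) * invQPochhammer K a k ^ 2 +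
        X ^ (2 * a * N + 2 * N ^ 2) * invQPochhammer K a N ^ 2 *
          ((1 - X ^ (a + 2 * N)) * series K (a + 2 * N)) := by
  induction N with
  | zero => simp [invQPochhammer_zero]
  | succ N ih =>
    have hstep := one_sub_X_pow_mul_series (K := K) (a := a + 2 * N) (by omega)
    have hinv := one_sub_X_pow_mul_inv (K := K) (a := a + 2 * N + 2) (by omega)
    rw [ih, hstep, sum_range_succ, invQPochhammer_succ,
      show a + 2 * (N + 1) = a + 2 * N + 2 by ring]
    linear_combination -(X ^ (2 * a * (N + 1) + 2 * (N + 1) ^ 2) * invQPochhammer K a N ^ 2 *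
      (1 - X ^ (a + 2 * N + 2))⁻¹ * series K (a + 2 * N + 2)) * hinv

theorem one_sub_X_pow_mul_series_eq_tsum {a : ℕ} (ha : 0 < a) :
    (1 - X ^ a) * series K a = ∑' k, X ^ (2 * a * k + 2 * k ^ 2) * invQPochhammer K a k ^ 2 := by
  refine (tsum_eq_of_X_pow_dvd_sub_sum (X_pow_dvd_X_pow_mul_invQPochhammer_sq a) fun N => ?_).symm
  rw [one_sub_X_pow_mul_series_eq_sum_add ha N, add_sub_cancel_left, mul_assoc]
  exact X_pow_dvd_X_pow_mul (by nlinarith) _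

end RogersFine

section MockTheta

open RogersFine

variable {K : Type*} [Field K]

lemma prod_inv_one_sub_X_pow_odd (k : ℕ) :
    ∏ j ∈ range (k + 1), (1 - X ^ (2 * j + 1) : K⟦X⟧)⁻¹ = (1 - X)⁻¹ * invQPochhammer K 1 k := by
  rw [prod_range_succ', mul_comm, invQPochhammer]
  simp only [mul_zero, zero_add, pow_one, add_comm 1]

variable [TopologicalSpace K] [IsTopologicalRing K] [T2Space K]

theorem tsum_X_pow_mul_prod_inv_one_sub_X_pow_odd :
    ∑' k, X ^ k * ∏ j ∈ range (k + 1), (1 - X ^ (2 * j + 1) : K⟦X⟧)⁻¹ =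
      (1 - X)⁻¹ * series K 1 := by
  rw [series, ← (summable_X_pow_mul_invQPochhammer (K := K) one_pos).tsum_mul_left]
  exact tsum_congr fun k => by rw [prod_inv_one_sub_X_pow_odd, one_mul]; ring

theorem tsum_X_pow_mul_prod_inv_one_sub_X_pow_odd_sq :
    ∑' k, X ^ (2 * k ^ 2 + 2 * k) * (∏ j ∈ range (k + 1), (1 - X ^ (2 * j + 1) : K⟦X⟧)⁻¹) ^ 2 =
      (1 - X)⁻¹ * series K 1 := by
  have hX : (1 - X : K⟦X⟧) * (1 - X)⁻¹ = 1 := by simp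
  calc _ = (1 - X : K⟦X⟧)⁻¹ ^ 2 *
        ∑' k, X ^ (2 * 1 * k + 2 * k ^ 2) * invQPochhammer K 1 k ^ 2 := by
        rw [← (summable_of_X_pow_dvd
          (X_pow_dvd_X_pow_mul_invQPochhammer_sq (K := K) 1)).tsum_mul_left]
        exact tsum_congr fun k => by rw [prod_inv_one_sub_X_pow_odd]; ring
    _ = (1 - X : K⟦X⟧)⁻¹ * ((1 - X) * (1 - X)⁻¹) * series K 1 := by
        rw [← one_sub_X_pow_mul_series_eq_tsum (K := K) one_pos, pow_one]; ring
    _ = _ := by rw [hX, mul_one]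

end MockTheta

/-- As formal power series,
`Σ_{n≥0} q^n/∏_{j=0}^{n}(1−q^{2j+1}) = Σ_{n≥0} q^{2n²+2n}/∏_{j=0}^{n}(1−q^{2j+1})²`:
the two standard expressions for Ramanujan's third order mock theta function `ω(q)` agree. -/
theorem mockOmega_two_expressions_agree : ∀ n : ℕ, mockOmegaCoeffAlt n = mockOmegaCoeff n := by
  intro n
  rw [mockOmegaCoeffAlt, mockOmegaCoeff,
    ← coeff_tsum_of_X_pow_dvd (fun k => dvd_mul_right _ _),
    ← coeff_tsum_of_X_pow_dvd (fun k => X_pow_dvd_X_pow_mul (by nlinarith) _),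
    tsum_X_pow_mul_prod_inv_one_sub_X_pow_odd, tsum_X_pow_mul_prod_inv_one_sub_X_pow_odd_sq]
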